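/- Let E ∈ ℂ^{n×n} be Hermitian, F ∈ ℂ^{m×n}, and take G = 0 ∈ ℂ^{m×m}; let q ∈ ℂⁿ, r ∈ ℂᵐ, û ∈ ℂⁿ, p̂ ∈ ℂᵐ. Fix positive weights α₁, α₂, β₁, β₂. Set Q = q − Eû − F*p̂, R̂ = r − Fû, N₁ = J_S^n Φ_E D_{S,n}⁻¹, N₂ = J_SK^n Ψ_E D_{SK,n}⁻¹. Define X̂₁ = [[α₁⁻¹(ℜ(û)ᵀ⊗Iₙ)N₁, −α₁⁻¹(ℑ(û)ᵀ⊗Iₙ)N₂, α₂⁻¹(Iₙ⊗ℜ(p̂)ᵀ)Σ_F, α₂⁻¹(Iₙ⊗ℑ(p̂)ᵀ)Σ_F],[α₁⁻¹(ℑ(û)ᵀ⊗Iₙ)N₁, α₁⁻¹(ℜ(û)ᵀ⊗Iₙ)N₂, α₂⁻¹(Iₙ⊗ℑ(p̂)ᵀ)Σ_F, −α₂⁻¹(Iₙ⊗ℜ(p̂)ᵀ)Σ_F]], Ẑ = [[α₂⁻¹(ℜ(û)ᵀ⊗I_m)Σ_F, −α₂⁻¹(ℑ(û)ᵀ⊗I_m)Σ_F],[α₂⁻¹(ℑ(û)ᵀ⊗I_m)Σ_F,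 α₂⁻¹(ℜ(û)ᵀ⊗I_m)Σ_F]], Z = [0_{2m×n²}, Ẑ], I₁ = [−β₁⁻¹I_{2n}, 0_{2n×2m}], I₂ = [0_{2m×2n}, −β₂⁻¹I_{2m}], and M = [[X̂₁, I₁],[Z, I₂]]. Then MMᵀ is invertible, and the sparsity-preserving structured backward error inf{ sqrt(α₁²‖ΔE⊙Θ_E‖_F² + α₂²‖ΔF⊙Θ_F‖_F² + β₁²‖Δq‖₂² + β₂²‖Δr‖₂²) : ΔE ∈ ℂ^{n×n} Hermitian, ΔF ∈ ℂ^{m×n}, Δq ∈ ℂⁿ, Δr ∈ ℂᵐ, (E+ΔE⊙Θ_E)û + (F+ΔF⊙Θ_F)*p̂ = q+Δq and (F+ΔF⊙Θ_F)û = r+Δr } is attained and equals ‖Mᵀ(MMᵀ)⁻¹[ℜ(Q); ℑ(Q); ℜ(R̂); ℑ(R̂)]‖₂. -/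

import Mathlib

open Matrix

noncomputable section

namespace GSPPBE

/-- Entrywise real part of a complex matrix. -/
def reM {I J : Type*} (A : Matrix I J ℂ) : Matrix I J ℝ := A.map Complex.re

/-- Entrywise imaginary part of a complex matrix. -/
def imM {I J : Type*} (A : Matrix I J ℂ) : Matrix I J ℝ := A.map Complex.im

/-- Entrywise real part of a complex vector. -/
def reV {I : Type*} (v : I → ℂ) : I → ℝ := fun i => (v i).re

/-- Entrywise imaginary part of a complex vector. -/
def imV {I : Type*} (v : I → ℂ) : I → ℝ := fun i => (v i).im

/-- Frobenius norm of a matrix. -/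
def frob {I J α : Type*} [Fintype I] [Fintype J] [SeminormedAddGroup α]
    (A : Matrix I J α) : ℝ :=
  Real.sqrt (∑ i, ∑ j, ‖A i j‖ ^ 2)

/-- Euclidean norm of a (finitely indexed) vector. -/
def eunorm {I α : Type*} [Fintype I] [SeminormedAddGroup α] (v : I → α) : ℝ :=
  Real.sqrt (∑ i, ‖v i‖ ^ 2)

/-- Column-major vectorization: `vecM A (j, i) = A i j`. -/
def vecM {I J α : Type*} (A : Matrix I J α) : J × I → α := fun p => A p.2 p.1

/-- Index type for the lower triangle including the diagonal (positions of `vec_S`);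
it has `m(m+1)/2` elements. -/
abbrev SymIdx (m : ℕ) := {p : Fin m × Fin m // p.2 ≤ p.1}

/-- Index type for the strictly lower triangle (positions of `vec_SK`);
it has `m(m-1)/2` elements. -/
abbrev SkewIdx (m : ℕ) := {p : Fin m × Fin m // p.2 < p.1}

/-- `vec_S` of a (symmetric) matrix: its lower-triangular entries `Z i j`, `j ≤ i`. -/
def vecS {m : ℕ} {α : Type*} (Z : Matrix (Fin m) (Fin m) α) : SymIdx m → α :=
  fun p => Z p.1.1 p.1.2

/-- `vec_SK` of a (skew-symmetric) matrix: its strictly lower-triangular entries `Z i j`, `j < i`. -/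
def vecSK {m : ℕ} {α : Type*} (Z : Matrix (Fin m) (Fin m) α) : SkewIdx m → α :=
  fun p => Z p.1.1 p.1.2

/-- `J_S^m`: its column at position `(i,j)`, `j ≤ i`, is `vec(eᵢeⱼᵀ + eⱼeᵢᵀ)` for `i > j` and
`vec(eⱼeⱼᵀ)` for `i = j`.  Rows are vec positions `(column, row)`. -/
def JS (m : ℕ) : Matrix (Fin m × Fin m) (SymIdx m) ℝ :=
  Matrix.of fun cr p =>
    (if cr.2 = p.1.1 ∧ cr.1 = p.1.2 then (1 : ℝ) else 0) +
    (if p.1.1 ≠ p.1.2 ∧ cr.2 = p.1.2 ∧ cr.1 = p.1.1 then 1 else 0)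

/-- `J_SK^m`: its column at position `(i,j)`, `j < i`, is `vec(eᵢeⱼᵀ − eⱼeᵢᵀ)`. -/
def JSK (m : ℕ) : Matrix (Fin m × Fin m) (SkewIdx m) ℝ :=
  Matrix.of fun cr p =>
    (if cr.2 = p.1.1 ∧ cr.1 = p.1.2 then (1 : ℝ) else 0) -
    (if cr.2 = p.1.2 ∧ cr.1 = p.1.1 then 1 else 0)

open Classical in
/-- Sign pattern `Θ_X` of a matrix, with values in the same ring. -/
def theta {I J α : Type*} [Zero α] [One α] (X : Matrix I J α) : Matrix I J α :=
  Matrix.of fun i j => if X i j = 0 then 0 else 1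

open Classical in
/-- Real-valued sign pattern `Θ_X` of a matrix. -/
def thetaR {I J α : Type*} [Zero α] (X : Matrix I J α) : Matrix I J ℝ :=
  Matrix.of fun i j => if X i j = 0 then 0 else 1

/-- `Φ_X = diag(vec_S(Θ_X))`. -/
def Phi {m : ℕ} {α : Type*} [Zero α] (X : Matrix (Fin m) (Fin m) α) :
    Matrix (SymIdx m) (SymIdx m) ℝ :=
  Matrix.diagonal (vecS (thetaR X))

/-- `Ψ_X`: diagonal matrix listing the strictly lower-triangular entries of `Θ_X`
in `vec_SK` ordering. -/
def Psi {m : ℕ} {α : Type*} [Zero α] (X : Matrix (Fin m) (Fin m) α) :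
    Matrix (SkewIdx m) (SkewIdx m) ℝ :=
  Matrix.diagonal (vecSK (thetaR X))

/-- `Σ_X = diag(vec(Θ_X))`. -/
def Sig {I J α : Type*} [DecidableEq I] [DecidableEq J] [Zero α]
    (X : Matrix I J α) : Matrix (J × I) (J × I) ℝ :=
  Matrix.diagonal (vecM (thetaR X))

/-- `D_{S,m}`: diagonal entry `1` at the positions of diagonal entries `(j,j)`, `√2` elsewhere. -/
def DS (m : ℕ) : Matrix (SymIdx m) (SymIdx m) ℝ :=
  Matrix.diagonal fun p => if p.1.1 = p.1.2 then 1 else Real.sqrt 2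

/-- `D_{SK,m} = √2·I`. -/
def DSK (m : ℕ) : Matrix (SkewIdx m) (SkewIdx m) ℝ :=
  Matrix.diagonal fun _ => Real.sqrt 2

/-- `uᵀ ⊗ I_b`, viewed as a matrix acting on column-major vectorizations of `b×a` matrices. -/
def rowKronId {a b : ℕ} (u : Fin a → ℝ) : Matrix (Fin b) (Fin a × Fin b) ℝ :=
  Matrix.of fun r p => u p.1 * (if r = p.2 then 1 else 0)

/-- `I_a ⊗ vᵀ`, viewed as a matrix acting on column-major vectorizations of `b×a` matrices. -/
def idKronRow {a b : ℕ} (v : Fin b → ℝ) : Matrix (Fin a) (Fin a × Fin b) ℝ :=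
  Matrix.of fun r p => (if r = p.1 then 1 else 0) * v p.2

/-- The weighted norm `ζ^{σ₁}(A,B,C,q,r)`. -/
def zeta1 {n m : ℕ} {α : Type*} [SeminormedAddGroup α]
    (α₁ α₂ α₃ β₁ β₂ : ℝ)
    (A : Matrix (Fin n) (Fin n) α) (B : Matrix (Fin m) (Fin n) α)
    (C : Matrix (Fin m) (Fin m) α) (q : Fin n → α) (r : Fin m → α) : ℝ :=
  Real.sqrt (α₁ ^ 2 * frob A ^ 2 + α₂ ^ 2 * frob B ^ 2 + α₃ ^ 2 * frob C ^ 2 +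
    β₁ ^ 2 * eunorm q ^ 2 + β₂ ^ 2 * eunorm r ^ 2)

/-- The weighted norm `ζ^{σ₂}(A,B,H,C,q,r)`. -/
def zeta2 {n m : ℕ} {α : Type*} [SeminormedAddGroup α]
    (α₁ α₂ α₃ α₄ β₁ β₂ : ℝ)
    (A : Matrix (Fin n) (Fin n) α) (B : Matrix (Fin m) (Fin n) α)
    (H : Matrix (Fin m) (Fin n) α) (C : Matrix (Fin m) (Fin m) α)
    (q : Fin n → α) (r : Fin m → α) : ℝ :=
  Real.sqrt (α₁ ^ 2 * frob A ^ 2 + α₂ ^ 2 * frob B ^ 2 + α₃ ^ 2 * frob H ^ 2 +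
    α₄ ^ 2 * frob C ^ 2 + β₁ ^ 2 * eunorm q ^ 2 + β₂ ^ 2 * eunorm r ^ 2)

/-!
Write an admissible `ΔE ⊙ Θ_E` as `α₁⁻¹ (S + i K)` with `S` symmetric and `K` skew-symmetric,
`ΔF ⊙ Θ_F` as `α₂⁻¹ (B₁ + i B₂)`, `Δq = β₁⁻¹ (d₁ + i d₂)` and `Δr = β₂⁻¹ (e₁ + i e₂)`, and collect
`D_S vec_S(S)`, `D_SK vec_SK(K)`, `vec(B₁)`, `vec(B₂)`, `d₁`, `d₂`, `e₁`, `e₂` into one real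
vector `x`. The weights `D_S`, `D_SK` make the weighted cost equal to `‖x‖₂`, and splitting the
two perturbed equations into real and imaginary parts turns them into `M x = w`. The columns of
`M` belonging to `Δq, Δr` form the invertible diagonal `-diag(β⁻¹)`, so `MMᵀ` is positive
definite and `x₀ = Mᵀ(MMᵀ)⁻¹w` is the solution of least norm. Conversely any solution `x` of
`M x = w` decodes, through `N₁`, `N₂`, `Σ_F`, to an admissible perturbation whose cost is at
most `‖x‖₂` (the masks `Φ_E`, `Ψ_E`, `Σ_F` only discard coordinates); decoding `x₀` attains the
infimum.
-/

lemma frob_sq {I J α : Type*} [Fintype I] [Fintype J] [SeminormedAddGroup α] (A : Matrix I J α) :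
    frob A ^ 2 = ∑ i, ∑ j, ‖A i j‖ ^ 2 :=
  Real.sq_sqrt (by positivity)

lemma frob_sq_real {I J : Type*} [Fintype I] [Fintype J] (A : Matrix I J ℝ) :
    frob A ^ 2 = ∑ i, ∑ j, A i j ^ 2 := by
  simp [frob_sq]

lemma eunorm_nonneg {I α : Type*} [Fintype I] [SeminormedAddGroup α] (v : I → α) :
    0 ≤ eunorm v :=
  Real.sqrt_nonneg _

lemma eunorm_sq_real {I : Type*} [Fintype I] (v : I → ℝ) : eunorm v ^ 2 = ∑ i, v i ^ 2 := by
  rw [eunorm, Real.sq_sqrt (by positivity)]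
  simp

lemma eunorm_sq_sum {I K : Type*} [Fintype I] [Fintype K] (v : I ⊕ K → ℝ) :
    eunorm v ^ 2 = eunorm (v ∘ Sum.inl) ^ 2 + eunorm (v ∘ Sum.inr) ^ 2 := by
  simp only [eunorm_sq_real, Fintype.sum_sum_type, Function.comp_apply]

lemma eunorm_eq_sqrt_dotProduct {I : Type*} [Fintype I] (v : I → ℝ) :
    eunorm v = Real.sqrt (v ⬝ᵥ v) := by
  simp [eunorm, dotProduct, sq]

lemma frob_smul {I J α : Type*} [Fintype I] [Fintype J] [SeminormedAddCommGroup α]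
    [NormedSpace ℝ α] (c : ℝ) (A : Matrix I J α) : frob (c • A) = |c| * frob A := by
  simp only [frob, Matrix.smul_apply, norm_smul, Real.norm_eq_abs, mul_pow, ← Finset.mul_sum]
  rw [Real.sqrt_mul (sq_nonneg _), Real.sqrt_sq_eq_abs, abs_abs]

lemma eunorm_smul {I α : Type*} [Fintype I] [SeminormedAddCommGroup α] [NormedSpace ℝ α]
    (c : ℝ) (v : I → α) : eunorm (c • v) = |c| * eunorm v := by
  simp only [eunorm, Pi.smul_apply, norm_smul, Real.norm_eq_abs, mul_pow, ← Finset.mul_sum]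
  rw [Real.sqrt_mul (sq_nonneg _), Real.sqrt_sq_eq_abs, abs_abs]

lemma sq_mul_frob_inv_smul_sq {I J α : Type*} [Fintype I] [Fintype J] [SeminormedAddCommGroup α]
    [NormedSpace ℝ α] {c : ℝ} (hc : c ≠ 0) (A : Matrix I J α) :
    c ^ 2 * frob (c⁻¹ • A) ^ 2 = frob A ^ 2 := by
  rw [frob_smul, mul_pow, sq_abs, inv_pow, mul_inv_cancel_left₀ (pow_ne_zero 2 hc)]

lemma sq_mul_eunorm_inv_smul_sq {I α : Type*} [Fintype I] [SeminormedAddCommGroup α]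
    [NormedSpace ℝ α] {c : ℝ} (hc : c ≠ 0) (v : I → α) :
    c ^ 2 * eunorm (c⁻¹ • v) ^ 2 = eunorm v ^ 2 := by
  rw [eunorm_smul, mul_pow, sq_abs, inv_pow, mul_inv_cancel_left₀ (pow_ne_zero 2 hc)]

theorem eunorm_pinv_mulVec_le {p q : Type*} [Fintype p] [Fintype q] [DecidableEq p]
    (M : Matrix p q ℝ) (hM : IsUnit (M * Mᵀ)) {w : p → ℝ} {x : q → ℝ} (hx : M *ᵥ x = w) :
    eunorm ((Mᵀ * (M * Mᵀ)⁻¹) *ᵥ w) ≤ eunorm x := by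
  set y := (M * Mᵀ)⁻¹ *ᵥ w
  have hx₀ : (Mᵀ * (M * Mᵀ)⁻¹) *ᵥ w = Mᵀ *ᵥ y := (mulVec_mulVec _ _ _).symm
  have hsol : M *ᵥ (Mᵀ *ᵥ y) = w := by
    rw [mulVec_mulVec, mulVec_mulVec, mul_nonsing_inv _ ((isUnit_iff_isUnit_det _).mp hM),
      one_mulVec]
  -- `x - Mᵀ y` lies in the kernel of `M`, which is orthogonal to the range of `Mᵀ`
  have horth : (Mᵀ *ᵥ y) ⬝ᵥ (x - Mᵀ *ᵥ y) = 0 := by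
    rw [show (Mᵀ *ᵥ y) ⬝ᵥ (x - Mᵀ *ᵥ y) = y ⬝ᵥ (M *ᵥ (x - Mᵀ *ᵥ y)) by
      rw [dotProduct_mulVec, mulVec_transpose], mulVec_sub, hx, hsol, sub_self, dotProduct_zero]
  have hsplit : x ⬝ᵥ x = (Mᵀ *ᵥ y) ⬝ᵥ (Mᵀ *ᵥ y) + (x - Mᵀ *ᵥ y) ⬝ᵥ (x - Mᵀ *ᵥ y) := by
    simp only [sub_dotProduct, dotProduct_sub, dotProduct_comm x (Mᵀ *ᵥ y)] at horth ⊢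
    linarith
  rw [hx₀, eunorm_eq_sqrt_dotProduct, eunorm_eq_sqrt_dotProduct]
  gcongr
  rw [hsplit, le_add_iff_nonneg_right]
  exact dotProduct_self_star_nonneg _

theorem isLeast_eunorm_pinv_mulVec {p q : Type*} [Fintype p] [Fintype q] [DecidableEq p]
    (M : Matrix p q ℝ) (hM : IsUnit (M * Mᵀ)) (w : p → ℝ) {S : Set ℝ}
    (h_le : ∀ x, M *ᵥ x = w → ∃ t ∈ S, t ≤ eunorm x)
    (h_ge : ∀ t ∈ S, ∃ x, M *ᵥ x = w ∧ eunorm x = t) :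
    IsLeast S (eunorm ((Mᵀ * (M * Mᵀ)⁻¹) *ᵥ w)) := by
  have hsol : M *ᵥ ((Mᵀ * (M * Mᵀ)⁻¹) *ᵥ w) = w := by
    rw [mulVec_mulVec, ← Matrix.mul_assoc, mul_nonsing_inv _ ((isUnit_iff_isUnit_det _).mp hM),
      one_mulVec]
  refine ⟨?_, fun t ht => ?_⟩
  · obtain ⟨t, ht, hle⟩ := h_le _ hsol
    obtain ⟨x, hx, rfl⟩ := h_ge t ht
    rwa [le_antisymm hle (eunorm_pinv_mulVec_le M hM hx)] at ht
  · obtain ⟨x, hx, rfl⟩ := h_ge t ht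
    exact eunorm_pinv_mulVec_le M hM hx

lemma fromBlocks_smul_one_eq_fromCols_diagonal {p₁ p₂ q : Type*} [DecidableEq p₁]
    [DecidableEq p₂] (A : Matrix p₁ q ℝ) (C : Matrix p₂ q ℝ) (c₁ c₂ : ℝ) :
    fromBlocks A (fromCols (c₁ • (1 : Matrix p₁ p₁ ℝ)) 0) C (fromCols 0 (c₂ • 1)) =
      fromCols (fromRows A C) (diagonal (Sum.elim (fun _ => c₁) (fun _ => c₂))) := by
  ext (i | i) (j | (j | j)) <;> simp [one_apply, diagonal_apply]

theorem isUnit_fromCols_mul_transpose {p q : Type*} [Fintype p] [Fintype q] [DecidableEq p]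
    (A : Matrix p q ℝ) {d : p → ℝ} (hd : ∀ i, d i ≠ 0) :
    IsUnit (fromCols A (diagonal d) * (fromCols A (diagonal d))ᵀ) := by
  rw [transpose_fromCols, fromCols_mul_fromRows, diagonal_transpose, diagonal_mul_diagonal]
  refine PosDef.isUnit (PosDef.posSemidef_add ?_ (posDef_diagonal_iff.mpr fun i => ?_))
  · simpa using posSemidef_self_mul_conjTranspose A
  · exact mul_self_pos.mpr (hd i)

def reIm {I : Type*} (v : I → ℂ) : I ⊕ I → ℝ := Sum.elim (reV v) (imV v)

def ofReIm {I : Type*} (x : I ⊕ I → ℝ) : I → ℂ := fun i => ⟨x (Sum.inl i), x (Sum.inr i)⟩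

def ofReImM {I J : Type*} (R K : Matrix I J ℝ) : Matrix I J ℂ := of fun i j => ⟨R i j, K i j⟩

section ReIm

variable {I J : Type*}

lemma reIm_ofReIm (x : I ⊕ I → ℝ) : reIm (ofReIm x) = x := by
  ext (i | i) <;> rfl

lemma ofReIm_reIm (v : I → ℂ) : ofReIm (reIm v) = v := rfl

lemma reIm_injective : Function.Injective (reIm (I := I)) :=
  Function.LeftInverse.injective ofReIm_reIm

lemma ofReImM_reM_imM (A : Matrix I J ℂ) : ofReImM (reM A) (imM A) = A := rfl

lemma isHermitian_ofReImM {R K : Matrix I I ℝ} (hR : Rᵀ = R) (hK : Kᵀ = -K) :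
    (ofReImM R K).IsHermitian := by
  ext i j
  apply Complex.ext
  · simpa [ofReImM] using congr_fun₂ hR i j
  · have := congr_fun₂ hK i j
    simp only [transpose_apply] at this
    simp [ofReImM, this]

lemma reIm_sub (u v : I → ℂ) : reIm (u - v) = reIm u - reIm v := by
  ext (i | i) <;> simp [reIm, reV, imV]

lemma reIm_add (u v : I → ℂ) : reIm (u + v) = reIm u + reIm v := by
  ext (i | i) <;> simp [reIm, reV, imV]

lemma reIm_smul (c : ℝ) (v : I → ℂ) : reIm (c • v) = c • reIm v := by
  ext (i | i) <;> simp [reIm, reV, imV]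

variable [Fintype J]

lemma reIm_mulVec (A : Matrix I J ℂ) (u : J → ℂ) :
    reIm (A *ᵥ u) =
      Sum.elim (reM A *ᵥ reV u - imM A *ᵥ imV u) (reM A *ᵥ imV u + imM A *ᵥ reV u) := by
  ext (i | i) <;>
    simp [reIm, reV, imV, reM, imM, mulVec, dotProduct, Complex.re_sum, Complex.im_sum,
      Finset.sum_sub_distrib, Finset.sum_add_distrib]

lemma reIm_conjTranspose_mulVec (B : Matrix J I ℂ) (p : J → ℂ) :
    reIm (Bᴴ *ᵥ p) = Sum.elim ((reM B)ᵀ *ᵥ reV p + (imM B)ᵀ *ᵥ imV p)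
      ((reM B)ᵀ *ᵥ imV p - (imM B)ᵀ *ᵥ reV p) := by
  ext (i | i) <;>
    simp [reIm, reV, imV, reM, imM, mulVec, dotProduct, Complex.re_sum, Complex.im_sum,
      Finset.sum_add_distrib, sub_eq_add_neg]

variable [Fintype I]

lemma eunorm_ofReIm (x : I ⊕ I → ℝ) : eunorm (ofReIm x) = eunorm x := by
  rw [eunorm, eunorm, Fintype.sum_sum_type, ← Finset.sum_add_distrib]
  simp only [ofReIm, Complex.sq_norm, Complex.normSq_mk, Real.norm_eq_abs, sq_abs, ← sq]

lemma eunorm_reIm (v : I → ℂ) : eunorm (reIm v) = eunorm v := by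
  rw [← eunorm_ofReIm, ofReIm_reIm]

lemma frob_sq_ofReImM (R K : Matrix I J ℝ) : frob (ofReImM R K) ^ 2 = frob R ^ 2 + frob K ^ 2 := by
  rw [frob_sq, frob_sq, frob_sq, ← Finset.sum_add_distrib]
  simp only [ofReImM, of_apply, Complex.sq_norm, Complex.normSq_mk, Real.norm_eq_abs, sq_abs,
    ← sq, Finset.sum_add_distrib]

end ReIm

section Kronecker

variable {a b : ℕ}

lemma rowKronId_mulVec_vecM (u : Fin a → ℝ) (Y : Matrix (Fin b) (Fin a) ℝ) :
    rowKronId u *ᵥ vecM Y = Y *ᵥ u := by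
  ext r
  simp [rowKronId, vecM, mulVec, dotProduct, Fintype.sum_prod_type, mul_comm]

lemma idKronRow_mulVec_vecM (v : Fin b → ℝ) (Y : Matrix (Fin b) (Fin a) ℝ) :
    idKronRow v *ᵥ vecM Y = Yᵀ *ᵥ v := by
  ext r
  simp [idKronRow, vecM, mulVec, dotProduct, Fintype.sum_prod_type, mul_comm]

variable {σ κ : Type*} [Fintype σ] [Fintype κ]

/- In `rowKronId u * N` the dimension `b` is only known from `N`, so the product (here, in
`realMulVecMatrix` and in the main theorem) elaborates with the multiplication instance of the type
synonym `CStarMatrix`, which `mulVec_mulVec` does not match syntactically. -/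
lemma rowKronId_mul_mulVec (u : Fin a → ℝ) (N : Matrix (Fin a × Fin b) σ ℝ) (y : σ → ℝ) :
    (rowKronId u * N) *ᵥ y = rowKronId u *ᵥ (N *ᵥ y) :=
  (mulVec_mulVec _ _ _).symm

lemma idKronRow_mul_mulVec (v : Fin b → ℝ) (N : Matrix (Fin a × Fin b) σ ℝ) (y : σ → ℝ) :
    (idKronRow v * N) *ᵥ y = idKronRow v *ᵥ (N *ᵥ y) :=
  (mulVec_mulVec _ _ _).symm

def realMulVecMatrix (c : ℝ) (u : Fin a → ℂ) (N₁ : Matrix (Fin a × Fin b) σ ℝ)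
    (N₂ : Matrix (Fin a × Fin b) κ ℝ) : Matrix (Fin b ⊕ Fin b) (σ ⊕ κ) ℝ :=
  fromRows (fromCols (c • (rowKronId (reV u) * N₁)) ((-c) • (rowKronId (imV u) * N₂)))
    (fromCols (c • (rowKronId (imV u) * N₁)) (c • (rowKronId (reV u) * N₂)))

def realConjTransposeMulVecMatrix (c : ℝ) (p : Fin b → ℂ) (N₁ : Matrix (Fin a × Fin b) σ ℝ)
    (N₂ : Matrix (Fin a × Fin b) κ ℝ) : Matrix (Fin a ⊕ Fin a) (σ ⊕ κ) ℝ :=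
  fromRows (fromCols (c • (idKronRow (reV p) * N₁)) (c • (idKronRow (imV p) * N₂)))
    (fromCols (c • (idKronRow (imV p) * N₁)) ((-c) • (idKronRow (reV p) * N₂)))

lemma realMulVecMatrix_mulVec {c : ℝ} {u : Fin a → ℂ} {N₁ : Matrix (Fin a × Fin b) σ ℝ}
    {N₂ : Matrix (Fin a × Fin b) κ ℝ} {y : σ ⊕ κ → ℝ} {A : Matrix (Fin b) (Fin a) ℂ}
    (h₁ : N₁ *ᵥ (y ∘ Sum.inl) = vecM (reM A)) (h₂ : N₂ *ᵥ (y ∘ Sum.inr) = vecM (imM A)) :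
    realMulVecMatrix c u N₁ N₂ *ᵥ y = reIm ((c • A) *ᵥ u) := by
  simp only [realMulVecMatrix, fromRows_mulVec, fromCols_mulVec, smul_mulVec, neg_smul,
    neg_mulVec, rowKronId_mul_mulVec, h₁, h₂, rowKronId_mulVec_vecM, reIm_smul, reIm_mulVec]
  ext (i | i) <;>
    simp only [Sum.elim_inl, Sum.elim_inr, Pi.add_apply, Pi.sub_apply, Pi.neg_apply,
      Pi.smul_apply, smul_eq_mul] <;>
    ring

lemma realConjTransposeMulVecMatrix_mulVec {c : ℝ} {p : Fin b → ℂ}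
    {N₁ : Matrix (Fin a × Fin b) σ ℝ} {N₂ : Matrix (Fin a × Fin b) κ ℝ} {y : σ ⊕ κ → ℝ}
    {B : Matrix (Fin b) (Fin a) ℂ}
    (h₁ : N₁ *ᵥ (y ∘ Sum.inl) = vecM (reM B)) (h₂ : N₂ *ᵥ (y ∘ Sum.inr) = vecM (imM B)) :
    realConjTransposeMulVecMatrix c p N₁ N₂ *ᵥ y = reIm ((c • B)ᴴ *ᵥ p) := by
  simp only [realConjTransposeMulVecMatrix, fromRows_mulVec, fromCols_mulVec, smul_mulVec,
    neg_smul, neg_mulVec, idKronRow_mul_mulVec, h₁, h₂, idKronRow_mulVec_vecM,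
    conjTranspose_smul, star_trivial, reIm_smul, reIm_conjTranspose_mulVec]
  ext (i | i) <;>
    simp only [Sum.elim_inl, Sum.elim_inr, Pi.add_apply, Pi.sub_apply, Pi.neg_apply,
      Pi.smul_apply, smul_eq_mul] <;>
    ring

end Kronecker

section LowerTriangle

variable {k : ℕ}

def symOfLower (y : SymIdx k → ℝ) : Matrix (Fin k) (Fin k) ℝ :=
  of fun i j => y ⟨(max i j, min i j), min_le_max⟩

def skewOfLower (y : SkewIdx k → ℝ) : Matrix (Fin k) (Fin k) ℝ :=
  of fun i j => if h : j < i then y ⟨(i, j), h⟩ else if h' : i < j then -y ⟨(j, i), h'⟩ else 0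

lemma JS_mulVec (y : SymIdx k → ℝ) : JS k *ᵥ y = vecM (symOfLower y) := by
  ext ⟨c, r⟩
  rw [mulVec, dotProduct, Finset.sum_eq_single ⟨(max r c, min r c), min_le_max⟩]
  · rcases le_total c r with h | h <;>
      simp only [JS, symOfLower, vecM, of_apply, h, max_eq_left, min_eq_right, max_eq_right,
        min_eq_left, Fin.ext_iff, ne_eq, and_self, and_true] <;>
      split_ifs <;> first | (exfalso; omega) | simp
  · rintro ⟨⟨i, j⟩, hji⟩ - hp
    simp only [ne_eq, Subtype.ext_iff, Prod.ext_iff, Fin.ext_iff, Fin.le_def, Fin.coe_max,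
      Fin.coe_min] at hp hji
    simp only [JS, of_apply, Fin.ext_iff, ne_eq]
    split_ifs <;> first | (exfalso; omega) | simp
  · simp

lemma JSK_mulVec (y : SkewIdx k → ℝ) : JSK k *ᵥ y = vecM (skewOfLower y) := by
  ext ⟨c, r⟩
  rcases lt_trichotomy c r with h | rfl | h
  · rw [mulVec, dotProduct, Finset.sum_eq_single ⟨(r, c), h⟩]
    · simp [JSK, skewOfLower, vecM, h, h.ne']
    · rintro ⟨⟨i, j⟩, hji⟩ - hp
      simp only [ne_eq, Subtype.ext_iff, Prod.ext_iff, Fin.ext_iff, Fin.lt_def] at hp hji h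
      simp only [JSK, of_apply, Fin.ext_iff]
      split_ifs <;> first | (exfalso; omega) | simp
    · simp
  · simp only [vecM, skewOfLower, of_apply, lt_irrefl, dite_false]
    refine Finset.sum_eq_zero fun ⟨⟨i, j⟩, hji⟩ _ => ?_
    simp only [Fin.lt_def] at hji
    simp only [JSK, of_apply, Fin.ext_iff]
    split_ifs <;> first | (exfalso; omega) | simp
  · rw [mulVec, dotProduct, Finset.sum_eq_single ⟨(c, r), h⟩]
    · simp [JSK, skewOfLower, vecM, h, h.ne', not_lt.mpr h.le]
    · rintro ⟨⟨i, j⟩, hji⟩ - hp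
      simp only [ne_eq, Subtype.ext_iff, Prod.ext_iff, Fin.ext_iff, Fin.lt_def] at hp hji h
      simp only [JSK, of_apply, Fin.ext_iff]
      split_ifs <;> first | (exfalso; omega) | simp
    · simp

lemma symOfLower_transpose (y : SymIdx k → ℝ) : (symOfLower y)ᵀ = symOfLower y := by
  ext i j
  simp [symOfLower, max_comm, min_comm]

lemma skewOfLower_transpose (y : SkewIdx k → ℝ) : (skewOfLower y)ᵀ = -skewOfLower y := by
  ext i j
  rcases lt_trichotomy i j with h | rfl | h
  · simp [skewOfLower, h, not_lt.mpr h.le]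
  · simp [skewOfLower]
  · simp [skewOfLower, h, not_lt.mpr h.le]

lemma vecS_symOfLower (y : SymIdx k → ℝ) : vecS (symOfLower y) = y := by
  ext ⟨⟨i, j⟩, h⟩
  simp [vecS, symOfLower, max_eq_left h, min_eq_right h]

lemma vecSK_skewOfLower (y : SkewIdx k → ℝ) : vecSK (skewOfLower y) = y := by
  ext ⟨⟨i, j⟩, h⟩
  simp [vecSK, skewOfLower, h]

lemma symOfLower_vecS {Z : Matrix (Fin k) (Fin k) ℝ} (hZ : Zᵀ = Z) : symOfLower (vecS Z) = Z := by
  ext i j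
  rcases le_total j i with h | h
  · simp [symOfLower, vecS, h]
  · simpa [symOfLower, vecS, h] using congr_fun₂ hZ i j

lemma skewOfLower_vecSK {Z : Matrix (Fin k) (Fin k) ℝ} (hZ : Zᵀ = -Z) :
    skewOfLower (vecSK Z) = Z := by
  have hZ' : ∀ i j, Z i j = -Z j i := fun i j => by
    simpa using congr_fun₂ hZ j i
  ext i j
  rcases lt_trichotomy i j with h | rfl | h
  · simp [skewOfLower, vecSK, h, not_lt.mpr h.le, ← hZ']
  · have := hZ' i i
    simp only [skewOfLower, of_apply, lt_self_iff_false, dite_false]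
    linarith
  · simp [skewOfLower, vecSK, h]

end LowerTriangle

section FrobeniusNorm

variable {k : ℕ}

lemma sum_symIdx_eq_sum_ite (g : Fin k × Fin k → ℝ) :
    ∑ p : SymIdx k, g p.1 = ∑ p, if p.2 ≤ p.1 then g p else 0 := by
  rw [← Finset.sum_filter]
  exact (Finset.sum_subtype _ (by simp) g).symm

lemma sum_skewIdx_eq_sum_ite (g : Fin k × Fin k → ℝ) :
    ∑ p : SkewIdx k, g p.1 = ∑ p, if p.2 < p.1 then g p else 0 := by
  rw [← Finset.sum_filter]
  exact (Finset.sum_subtype _ (by simp) g).symm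

lemma sum_sum_eq_diag_add_two_mul_lower {f : Fin k → Fin k → ℝ} (hf : ∀ i j, f i j = f j i) :
    ∑ i, ∑ j, f i j = ∑ i, f i i + 2 * ∑ p : SkewIdx k, f p.1.1 p.1.2 := by
  have hupper : ∑ p : Fin k × Fin k, (if p.1 < p.2 then f p.1 p.2 else 0)
      = ∑ p : Fin k × Fin k, (if p.2 < p.1 then f p.1 p.2 else 0) :=
    Fintype.sum_equiv (Equiv.prodComm _ _) _ _ fun p => by
      rw [hf]
      rfl
  have htri : ∀ p : Fin k × Fin k, f p.1 p.2 = (if p.1 = p.2 then f p.1 p.2 else 0)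
      + (if p.2 < p.1 then f p.1 p.2 else 0) + (if p.1 < p.2 then f p.1 p.2 else 0) := by
    intro ⟨i, j⟩
    rcases lt_trichotomy i j with h | rfl | h
    · simp [h, h.ne, not_lt.mpr h.le]
    · simp
    · simp [h, h.ne', not_lt.mpr h.le]
  rw [← Fintype.sum_prod_type', Fintype.sum_congr _ _ htri, Finset.sum_add_distrib,
    Finset.sum_add_distrib, hupper, sum_skewIdx_eq_sum_ite (fun p => f p.1 p.2),
    Fintype.sum_prod_type]
  simp only [Finset.sum_ite_eq, Finset.mem_univ, if_true]
  ring

lemma sum_symIdx_eq_diag_add_lower (g : Fin k → Fin k → ℝ) :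
    ∑ p : SymIdx k, g p.1.1 p.1.2 = ∑ i, g i i + ∑ p : SkewIdx k, g p.1.1 p.1.2 := by
  have hsplit : ∀ p : Fin k × Fin k, (if p.2 ≤ p.1 then g p.1 p.2 else 0)
      = (if p.1 = p.2 then g p.1 p.2 else 0) + (if p.2 < p.1 then g p.1 p.2 else 0) := by
    intro ⟨i, j⟩
    rcases lt_trichotomy i j with h | rfl | h
    · simp [h.ne, not_le.mpr h, not_lt.mpr h.le]
    · simp
    · simp [h, h.le, h.ne']
  rw [sum_symIdx_eq_sum_ite (fun p => g p.1 p.2), sum_skewIdx_eq_sum_ite (fun p => g p.1 p.2),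
    Fintype.sum_congr _ _ hsplit, Finset.sum_add_distrib, Fintype.sum_prod_type]
  simp only [Finset.sum_ite_eq, Finset.mem_univ, if_true]

lemma DS_mulVec_apply_sq (y : SymIdx k → ℝ) (p : SymIdx k) :
    (DS k *ᵥ y) p ^ 2 = (if p.1.1 = p.1.2 then 1 else 2) * y p ^ 2 := by
  rw [DS, mulVec_diagonal]
  split_ifs <;> simp [mul_pow]

lemma DSK_mulVec_apply_sq (y : SkewIdx k → ℝ) (p : SkewIdx k) :
    (DSK k *ᵥ y) p ^ 2 = 2 * y p ^ 2 := by
  simp [DSK, mulVec_diagonal, mul_pow]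

theorem sum_sq_eq_sum_sq_DS_mulVec_vecS {Z : Matrix (Fin k) (Fin k) ℝ} (hZ : Zᵀ = Z) :
    ∑ i, ∑ j, Z i j ^ 2 = ∑ p, (DS k *ᵥ vecS Z) p ^ 2 := by
  have hsym : ∀ i j, Z i j = Z j i := fun i j => by simpa using congr_fun₂ hZ j i
  simp only [DS_mulVec_apply_sq, vecS]
  rw [sum_symIdx_eq_diag_add_lower (fun i j => (if i = j then 1 else 2) * Z i j ^ 2),
    sum_sum_eq_diag_add_two_mul_lower fun i j => by rw [hsym]]
  simp [Finset.mul_sum, fun p : SkewIdx k => p.2.ne']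

theorem sum_sq_eq_sum_sq_DSK_mulVec_vecSK {Z : Matrix (Fin k) (Fin k) ℝ} (hZ : Zᵀ = -Z) :
    ∑ i, ∑ j, Z i j ^ 2 = ∑ p, (DSK k *ᵥ vecSK Z) p ^ 2 := by
  have hskew : ∀ i j, Z i j = -Z j i := fun i j => by simpa using congr_fun₂ hZ j i
  have hdiag : ∀ i, Z i i = 0 := fun i => by linarith [hskew i i]
  simp only [DSK_mulVec_apply_sq, vecSK]
  rw [sum_sum_eq_diag_add_two_mul_lower fun i j => by rw [hskew, neg_sq]]
  simp [hdiag, Finset.mul_sum]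

end FrobeniusNorm

section Pattern

variable {I J ι : Type*}

lemma thetaR_eq_zero_or_one {α : Type*} [Zero α] (X : Matrix I J α) (i : I) (j : J) :
    thetaR X i j = 0 ∨ thetaR X i j = 1 := by
  rw [thetaR, of_apply]
  split_ifs <;> simp

lemma thetaR_mul_eq_self {α : Type*} [Zero α] {X : Matrix I J α} {i : I} {j : J} {a : ℝ}
    (h : X i j = 0 → a = 0) : thetaR X i j * a = a := by
  rw [thetaR, of_apply]
  split_ifs with hX <;> simp [h, hX]

lemma hadamard_theta_eq_self {α : Type*} [MulZeroOneClass α] {X A : Matrix I J α}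
    (h : ∀ i j, X i j = 0 → A i j = 0) : A ⊙ theta X = A := by
  ext i j
  unfold theta
  by_cases hX : X i j = 0 <;> simp [hX, h i j]

lemma hadamard_theta_apply_eq_zero {α : Type*} [MulZeroOneClass α] {X : Matrix I J α}
    (A : Matrix I J α) {i : I} {j : J} (h : X i j = 0) : (A ⊙ theta X) i j = 0 := by
  simp [theta, h]

lemma thetaR_comm_of_isHermitian {E : Matrix ι ι ℂ} (hE : E.IsHermitian) (i j : ι) :
    thetaR E j i = thetaR E i j := by
  simp [thetaR, ← hE.apply i j]

lemma isHermitian_theta {E : Matrix ι ι ℂ} (hE : E.IsHermitian) : (theta E).IsHermitian := by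
  ext i j
  simp [theta, ← hE.apply i j, apply_ite]

variable [Fintype ι] [DecidableEq ι]

lemma sum_sq_diagonal_mulVec_le {θ : ι → ℝ} (hθ : ∀ i, θ i = 0 ∨ θ i = 1) (v : ι → ℝ) :
    ∑ i, (diagonal θ *ᵥ v) i ^ 2 ≤ ∑ i, v i ^ 2 :=
  Finset.sum_le_sum fun i _ => by rcases hθ i with h | h <;> simp [mulVec_diagonal, h, sq_nonneg]

lemma diagonal_mulVec_eq_self {θ : ι → ℝ} {v : ι → ℝ} (hv : ∀ i, θ i * v i = v i) :
    diagonal θ *ᵥ v = v := by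
  ext i
  simp [mulVec_diagonal, hv]

lemma diagonal_mulVec_diagonal_mulVec_inv {d : ι → ℝ} (hd : ∀ i, d i ≠ 0) (e v : ι → ℝ) :
    diagonal d *ᵥ (diagonal e *ᵥ ((diagonal d)⁻¹ *ᵥ v)) = diagonal e *ᵥ v := by
  rw [mulVec_mulVec, mulVec_mulVec, diagonal_mul_diagonal, funext fun i => mul_comm (d i) (e i),
    ← diagonal_mul_diagonal, Matrix.mul_assoc, mul_nonsing_inv _ ?_, Matrix.mul_one]
  simpa [det_diagonal, Finset.prod_ne_zero_iff] using hd

end Pattern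

section HermitianCoordinates

variable {k : ℕ} (E : Matrix (Fin k) (Fin k) ℂ)

/-- Inverse of `A ↦ [D_S vec_S(ℜ A); D_SK vec_SK(ℑ A)]` on Hermitian matrices with the pattern of
`E`. -/
def hermOfVec (y : SymIdx k ⊕ SkewIdx k → ℝ) : Matrix (Fin k) (Fin k) ℂ :=
  ofReImM (symOfLower (Phi E *ᵥ ((DS k)⁻¹ *ᵥ (y ∘ Sum.inl))))
    (skewOfLower (Psi E *ᵥ ((DSK k)⁻¹ *ᵥ (y ∘ Sum.inr))))

lemma JS_mul_Phi_mul_DS_inv_mulVec (y : SymIdx k ⊕ SkewIdx k → ℝ) :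
    (JS k * Phi E * (DS k)⁻¹) *ᵥ (y ∘ Sum.inl) = vecM (reM (hermOfVec E y)) := by
  rw [← mulVec_mulVec, ← mulVec_mulVec, JS_mulVec]
  rfl

lemma JSK_mul_Psi_mul_DSK_inv_mulVec (y : SymIdx k ⊕ SkewIdx k → ℝ) :
    (JSK k * Psi E * (DSK k)⁻¹) *ᵥ (y ∘ Sum.inr) = vecM (imM (hermOfVec E y)) := by
  rw [← mulVec_mulVec, ← mulVec_mulVec, JSK_mulVec]
  rfl

lemma isHermitian_hermOfVec (y : SymIdx k ⊕ SkewIdx k → ℝ) : (hermOfVec E y).IsHermitian :=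
  isHermitian_ofReImM (symOfLower_transpose _) (skewOfLower_transpose _)

variable {E}

lemma hermOfVec_hadamard_theta (hE : E.IsHermitian) (y : SymIdx k ⊕ SkewIdx k → ℝ) :
    hermOfVec E y ⊙ theta E = hermOfVec E y := by
  refine hadamard_theta_eq_self fun i j h => ?_
  have hij : thetaR E i j = 0 := by simp [thetaR, h]
  have hji : thetaR E j i = 0 := by rwa [thetaR_comm_of_isHermitian hE]
  apply Complex.ext
  · rcases le_total j i with h' | h' <;>
      simp [hermOfVec, ofReImM, symOfLower, Phi, mulVec_diagonal, vecS, h', hij, hji]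
  · rcases lt_trichotomy j i with h' | rfl | h'
    · simp [hermOfVec, ofReImM, skewOfLower, Psi, mulVec_diagonal, vecSK, h', hij]
    · simp [hermOfVec, ofReImM, skewOfLower]
    · simp [hermOfVec, ofReImM, skewOfLower, Psi, mulVec_diagonal, vecSK, h', not_lt.mpr h'.le,
        hji]

variable (E) in
lemma frob_sq_hermOfVec_le (y : SymIdx k ⊕ SkewIdx k → ℝ) :
    frob (hermOfVec E y) ^ 2 ≤ eunorm y ^ 2 := by
  rw [eunorm_sq_real, hermOfVec, frob_sq_ofReImM, frob_sq_real, frob_sq_real,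
    sum_sq_eq_sum_sq_DS_mulVec_vecS (symOfLower_transpose _), vecS_symOfLower,
    sum_sq_eq_sum_sq_DSK_mulVec_vecSK (skewOfLower_transpose _), vecSK_skewOfLower, DS, Phi,
    diagonal_mulVec_diagonal_mulVec_inv, DSK, Psi, diagonal_mulVec_diagonal_mulVec_inv,
    Fintype.sum_sum_type]
  · exact add_le_add (sum_sq_diagonal_mulVec_le (fun _ => thetaR_eq_zero_or_one _ _ _) _)
      (sum_sq_diagonal_mulVec_le (fun _ => thetaR_eq_zero_or_one _ _ _) _)
  · simp
  · intro p
    split_ifs <;> simp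

lemma exists_hermOfVec_eq {A : Matrix (Fin k) (Fin k) ℂ}
    (hA : A.IsHermitian) (hpat : ∀ i j, E i j = 0 → A i j = 0) :
    ∃ y, hermOfVec E y = A ∧ eunorm y ^ 2 = frob A ^ 2 := by
  have hre : (reM A)ᵀ = reM A := by
    ext i j
    simp [reM, ← hA.apply i j]
  have him : (imM A)ᵀ = -imM A := by
    ext i j
    simp [imM, ← hA.apply i j]
  have hDS : IsUnit (DS k).det := by
    rw [DS, det_diagonal]
    exact (Finset.prod_ne_zero_iff.mpr fun p _ => by split_ifs <;> positivity).isUnit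
  have hDSK : IsUnit (DSK k).det := by
    rw [DSK, det_diagonal]
    exact (Finset.prod_ne_zero_iff.mpr fun p _ => by positivity).isUnit
  have hPhi : Phi E *ᵥ ((DS k)⁻¹ *ᵥ (DS k *ᵥ vecS (reM A))) = vecS (reM A) := by
    rw [mulVec_mulVec _ (DS k)⁻¹, nonsing_inv_mul _ hDS, one_mulVec, Phi]
    exact diagonal_mulVec_eq_self fun p => thetaR_mul_eq_self fun h => by
      simp [reM, vecS, hpat _ _ h]
  have hPsi : Psi E *ᵥ ((DSK k)⁻¹ *ᵥ (DSK k *ᵥ vecSK (imM A))) = vecSK (imM A) := by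
    rw [mulVec_mulVec _ (DSK k)⁻¹, nonsing_inv_mul _ hDSK, one_mulVec, Psi]
    exact diagonal_mulVec_eq_self fun p => thetaR_mul_eq_self fun h => by
      simp [imM, vecSK, hpat _ _ h]
  refine ⟨Sum.elim (DS k *ᵥ vecS (reM A)) (DSK k *ᵥ vecSK (imM A)), ?_, ?_⟩
  · rw [hermOfVec, Sum.elim_comp_inl, Sum.elim_comp_inr, hPhi, hPsi, symOfLower_vecS hre,
      skewOfLower_vecSK him, ofReImM_reM_imM]
  · simp only [eunorm_sq_real, Fintype.sum_sum_type, Sum.elim_inl, Sum.elim_inr]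
    rw [← sum_sq_eq_sum_sq_DS_mulVec_vecS hre, ← sum_sq_eq_sum_sq_DSK_mulVec_vecSK him,
      ← frob_sq_real, ← frob_sq_real, ← frob_sq_ofReImM, ofReImM_reM_imM]

end HermitianCoordinates

section PatternCoordinates

variable {I J : Type*} [Fintype I] [Fintype J] [DecidableEq I] [DecidableEq J]
  (F : Matrix I J ℂ)

def unvecM {α : Type*} (v : J × I → α) : Matrix I J α := of fun i j => v (j, i)

omit [DecidableEq I] [DecidableEq J] in
lemma sum_sq_unvecM (v : J × I → ℝ) : ∑ i, ∑ j, unvecM v i j ^ 2 = ∑ p, v p ^ 2 := by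
  rw [Finset.sum_comm, Fintype.sum_prod_type]
  rfl

def patOfVec (y : (J × I) ⊕ (J × I) → ℝ) : Matrix I J ℂ :=
  ofReImM (unvecM (Sig F *ᵥ (y ∘ Sum.inl))) (unvecM (Sig F *ᵥ (y ∘ Sum.inr)))

lemma Sig_mulVec_inl (y : (J × I) ⊕ (J × I) → ℝ) :
    Sig F *ᵥ (y ∘ Sum.inl) = vecM (reM (patOfVec F y)) := rfl

lemma Sig_mulVec_inr (y : (J × I) ⊕ (J × I) → ℝ) :
    Sig F *ᵥ (y ∘ Sum.inr) = vecM (imM (patOfVec F y)) := rfl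

lemma patOfVec_hadamard_theta (y : (J × I) ⊕ (J × I) → ℝ) :
    patOfVec F y ⊙ theta F = patOfVec F y :=
  hadamard_theta_eq_self fun i j h => by
    simp [patOfVec, ofReImM, unvecM, Sig, mulVec_diagonal, vecM, thetaR, h, Complex.ext_iff]

lemma frob_sq_patOfVec_le (y : (J × I) ⊕ (J × I) → ℝ) :
    frob (patOfVec F y) ^ 2 ≤ eunorm y ^ 2 := by
  rw [eunorm_sq_real, patOfVec, frob_sq_ofReImM, frob_sq_real, frob_sq_real, sum_sq_unvecM,
    sum_sq_unvecM, Fintype.sum_sum_type, Sig]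
  exact add_le_add (sum_sq_diagonal_mulVec_le (fun _ => thetaR_eq_zero_or_one _ _ _) _)
    (sum_sq_diagonal_mulVec_le (fun _ => thetaR_eq_zero_or_one _ _ _) _)

variable {F} in
lemma exists_patOfVec_eq {B : Matrix I J ℂ} (hpat : ∀ i j, F i j = 0 → B i j = 0) :
    ∃ y, patOfVec F y = B ∧ eunorm y ^ 2 = frob B ^ 2 := by
  have hSig : ∀ f : ℂ → ℝ, f 0 = 0 → Sig F *ᵥ vecM (B.map f) = vecM (B.map f) := fun f hf =>
    diagonal_mulVec_eq_self fun p => thetaR_mul_eq_self fun h => by simp [vecM, hpat _ _ h, hf]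
  refine ⟨Sum.elim (vecM (reM B)) (vecM (imM B)), ?_, ?_⟩
  · rw [patOfVec, Sum.elim_comp_inl, Sum.elim_comp_inr, reM, imM, hSig _ Complex.zero_re,
      hSig _ Complex.zero_im]
    rfl
  · simp only [eunorm_sq_real, Fintype.sum_sum_type, Sum.elim_inl, Sum.elim_inr]
    rw [← sum_sq_unvecM, ← sum_sq_unvecM, ← frob_sq_real, ← frob_sq_real, ← frob_sq_ofReImM]
    rfl

end PatternCoordinates

section BackwardError

variable {n m : ℕ} (E : Matrix (Fin n) (Fin n) ℂ) (F : Matrix (Fin m) (Fin n) ℂ)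
  (q : Fin n → ℂ) (r : Fin m → ℂ) (uh : Fin n → ℂ) (ph : Fin m → ℂ) (α₁ α₂ β₁ β₂ : ℝ)

abbrev PerturbationCoord (n m : ℕ) : Type :=
  ((SymIdx n ⊕ SkewIdx n) ⊕ ((Fin n × Fin m) ⊕ (Fin n × Fin m))) ⊕
    ((Fin n ⊕ Fin n) ⊕ (Fin m ⊕ Fin m))

/-- Unfolds to the matrix `M` of the main theorem. -/
def perturbationMatrix :
    Matrix ((Fin n ⊕ Fin n) ⊕ (Fin m ⊕ Fin m)) (PerturbationCoord n m) ℝ :=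
  fromBlocks
    (fromCols (realMulVecMatrix α₁⁻¹ uh (JS n * Phi E * (DS n)⁻¹) (JSK n * Psi E * (DSK n)⁻¹))
      (realConjTransposeMulVecMatrix α₂⁻¹ ph (Sig F) (Sig F)))
    (fromCols ((-(β₁⁻¹)) • 1) 0)
    (fromCols 0 (realMulVecMatrix α₂⁻¹ uh (Sig F) (Sig F)))
    (fromCols 0 ((-(β₂⁻¹)) • 1))

def residualVec : (Fin n ⊕ Fin n) ⊕ (Fin m ⊕ Fin m) → ℝ :=
  Sum.elim (reIm (q - E *ᵥ uh - Fᴴ *ᵥ ph)) (reIm (r - F *ᵥ uh))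

def backwardErrors : Set ℝ :=
  {t : ℝ | ∃ (ΔE : Matrix (Fin n) (Fin n) ℂ) (ΔF : Matrix (Fin m) (Fin n) ℂ)
      (Δq : Fin n → ℂ) (Δr : Fin m → ℂ),
      ΔE.IsHermitian ∧
      (E + ΔE.hadamard (theta E)) *ᵥ uh + (F + ΔF.hadamard (theta F))ᴴ *ᵥ ph = q + Δq ∧
      (F + ΔF.hadamard (theta F)) *ᵥ uh = r + Δr ∧
      t = Real.sqrt (α₁ ^ 2 * frob (ΔE.hadamard (theta E)) ^ 2 +
            α₂ ^ 2 * frob (ΔF.hadamard (theta F)) ^ 2 +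
            β₁ ^ 2 * eunorm Δq ^ 2 + β₂ ^ 2 * eunorm Δr ^ 2)}

theorem isUnit_perturbationMatrix_mul_transpose {β₁ β₂ : ℝ} (hβ₁ : β₁ ≠ 0) (hβ₂ : β₂ ≠ 0) :
    IsUnit (perturbationMatrix E F uh ph α₁ α₂ β₁ β₂ *
      (perturbationMatrix E F uh ph α₁ α₂ β₁ β₂)ᵀ) := by
  rw [perturbationMatrix, fromBlocks_smul_one_eq_fromCols_diagonal]
  exact isUnit_fromCols_mul_transpose _ fun i => by cases i <;> simp [hβ₁, hβ₂]

variable {E F uh ph α₁ α₂ β₁ β₂} in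
lemma perturbationMatrix_mulVec (x : PerturbationCoord n m → ℝ) :
    perturbationMatrix E F uh ph α₁ α₂ β₁ β₂ *ᵥ x = Sum.elim
      (reIm ((α₁⁻¹ • hermOfVec E (x ∘ Sum.inl ∘ Sum.inl)) *ᵥ uh
        + (α₂⁻¹ • patOfVec F (x ∘ Sum.inl ∘ Sum.inr))ᴴ *ᵥ ph
        - β₁⁻¹ • ofReIm (x ∘ Sum.inr ∘ Sum.inl)))
      (reIm ((α₂⁻¹ • patOfVec F (x ∘ Sum.inl ∘ Sum.inr)) *ᵥ uh
        - β₂⁻¹ • ofReIm (x ∘ Sum.inr ∘ Sum.inr))) := by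
  rw [perturbationMatrix, fromBlocks_mulVec, fromCols_mulVec, fromCols_mulVec, fromCols_mulVec,
    fromCols_mulVec, realMulVecMatrix_mulVec (JS_mul_Phi_mul_DS_inv_mulVec E _)
      (JSK_mul_Psi_mul_DSK_inv_mulVec E _),
    realConjTransposeMulVecMatrix_mulVec (Sig_mulVec_inl F _) (Sig_mulVec_inr F _),
    realMulVecMatrix_mulVec (Sig_mulVec_inl F _) (Sig_mulVec_inr F _)]
  simp only [reIm_add, reIm_sub, reIm_smul, reIm_ofReIm, smul_mulVec, one_mulVec, zero_mulVec,
    add_zero, zero_add, zero_sub, neg_smul, neg_mulVec, ← sub_eq_add_neg]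
  rfl

lemma perturbed_eq_iff (A : Matrix (Fin n) (Fin n) ℂ) (B : Matrix (Fin m) (Fin n) ℂ)
    (Δq : Fin n → ℂ) (Δr : Fin m → ℂ) :
    ((E + A) *ᵥ uh + (F + B)ᴴ *ᵥ ph = q + Δq ∧ (F + B) *ᵥ uh = r + Δr) ↔
      Sum.elim (reIm (A *ᵥ uh + Bᴴ *ᵥ ph - Δq)) (reIm (B *ᵥ uh - Δr)) =
        residualVec E F q r uh ph := by
  rw [residualVec, Sum.elim_eq_iff, reIm_injective.eq_iff, reIm_injective.eq_iff, add_mulVec,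
    conjTranspose_add, add_mulVec, add_mulVec]
  refine and_congr ⟨fun h => ?_, fun h => ?_⟩ ⟨fun h => ?_, fun h => ?_⟩ <;>
    linear_combination h

variable {E F q r uh ph α₁ α₂ β₁ β₂}

theorem exists_mem_backwardErrors_le (hE : E.IsHermitian) (hα₁ : α₁ ≠ 0) (hα₂ : α₂ ≠ 0)
    (hβ₁ : β₁ ≠ 0) (hβ₂ : β₂ ≠ 0)
    {x : PerturbationCoord n m → ℝ}
    (hx : perturbationMatrix E F uh ph α₁ α₂ β₁ β₂ *ᵥ x = residualVec E F q r uh ph) :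
    ∃ t ∈ backwardErrors E F q r uh ph α₁ α₂ β₁ β₂, t ≤ eunorm x := by
  set ΔE := α₁⁻¹ • hermOfVec E (x ∘ Sum.inl ∘ Sum.inl)
  set ΔF := α₂⁻¹ • patOfVec F (x ∘ Sum.inl ∘ Sum.inr)
  have hΔE : ΔE ⊙ theta E = ΔE := by rw [smul_hadamard, hermOfVec_hadamard_theta hE]
  have hΔF : ΔF ⊙ theta F = ΔF := by rw [smul_hadamard, patOfVec_hadamard_theta]
  rw [perturbationMatrix_mulVec, ← perturbed_eq_iff] at hx
  refine ⟨_, ⟨ΔE, ΔF, _, _, (isHermitian_hermOfVec E _).smul (IsSelfAdjoint.all _),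
    by rw [hΔE, hΔF]; exact hx.1, by rw [hΔF]; exact hx.2, rfl⟩, ?_⟩
  rw [hΔE, hΔF, sq_mul_frob_inv_smul_sq hα₁, sq_mul_frob_inv_smul_sq hα₂,
    sq_mul_eunorm_inv_smul_sq hβ₁, sq_mul_eunorm_inv_smul_sq hβ₂, eunorm_ofReIm, eunorm_ofReIm,
    ← Real.sqrt_sq (eunorm_nonneg x), eunorm_sq_sum x, eunorm_sq_sum (x ∘ Sum.inl),
    eunorm_sq_sum (x ∘ Sum.inr), ← add_assoc]
  simp only [Function.comp_assoc]
  have hcostE := frob_sq_hermOfVec_le E (x ∘ Sum.inl ∘ Sum.inl)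
  have hcostF := frob_sq_patOfVec_le F (x ∘ Sum.inl ∘ Sum.inr)
  exact Real.sqrt_le_sqrt (by linarith)

theorem exists_perturbationMatrix_mulVec_eq (hE : E.IsHermitian) (hα₁ : α₁ ≠ 0) (hα₂ : α₂ ≠ 0)
    (hβ₁ : β₁ ≠ 0) (hβ₂ : β₂ ≠ 0) {t : ℝ} (ht : t ∈ backwardErrors E F q r uh ph α₁ α₂ β₁ β₂) :
    ∃ x, perturbationMatrix E F uh ph α₁ α₂ β₁ β₂ *ᵥ x = residualVec E F q r uh ph ∧
      eunorm x = t := by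
  obtain ⟨ΔE, ΔF, Δq, Δr, hΔE, h₁, h₂, rfl⟩ := ht
  obtain ⟨yE, hyE, hnE⟩ := exists_hermOfVec_eq (E := E) (A := α₁ • (ΔE ⊙ theta E))
    ((hΔE.hadamard (isHermitian_theta hE)).smul (IsSelfAdjoint.all _))
    fun i j h => by rw [Matrix.smul_apply, hadamard_theta_apply_eq_zero _ h, smul_zero]
  obtain ⟨yF, hyF, hnF⟩ := exists_patOfVec_eq (F := F) (B := α₂ • (ΔF ⊙ theta F))
    fun i j h => by rw [Matrix.smul_apply, hadamard_theta_apply_eq_zero _ h, smul_zero]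
  refine ⟨Sum.elim (Sum.elim yE yF) (Sum.elim (reIm (β₁ • Δq)) (reIm (β₂ • Δr))), ?_, ?_⟩
  · rw [perturbationMatrix_mulVec, ← perturbed_eq_iff]
    simp only [← Function.comp_assoc, Sum.elim_comp_inl, Sum.elim_comp_inr, hyE, hyF, ofReIm_reIm,
      smul_smul, inv_mul_cancel₀ hα₁, inv_mul_cancel₀ hα₂, inv_mul_cancel₀ hβ₁,
      inv_mul_cancel₀ hβ₂, one_smul]
    exact ⟨h₁, h₂⟩
  · rw [← Real.sqrt_sq (eunorm_nonneg _), eunorm_sq_sum, Sum.elim_comp_inl, Sum.elim_comp_inr,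
      eunorm_sq_sum (Sum.elim yE yF), eunorm_sq_sum (Sum.elim (reIm _) _)]
    simp only [Sum.elim_comp_inl, Sum.elim_comp_inr]
    rw [← add_assoc, hnE, hnF, eunorm_reIm, eunorm_reIm, frob_smul, frob_smul, eunorm_smul,
      eunorm_smul]
    simp only [mul_pow, sq_abs]

end BackwardError

/-- Corollary 3.4: sparsity-preserving structured backward error for the GSPP
with `E` Hermitian and `G = 0`. -/
theorem structured_BE_case_i_G_zero
    (n m : ℕ) (E : Matrix (Fin n) (Fin n) ℂ) (hE : E.IsHermitian)
    (F : Matrix (Fin m) (Fin n) ℂ)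
    (q : Fin n → ℂ) (r : Fin m → ℂ) (uh : Fin n → ℂ) (ph : Fin m → ℂ)
    (α₁ α₂ β₁ β₂ : ℝ)
    (hα₁ : 0 < α₁) (hα₂ : 0 < α₂) (hβ₁ : 0 < β₁) (hβ₂ : 0 < β₂) :
    let Q : Fin n → ℂ := q - E *ᵥ uh - Fᴴ *ᵥ ph
    let Rh : Fin m → ℂ := r - F *ᵥ uh
    let N₁ := JS n * Phi E * (DS n)⁻¹
    let N₂ := JSK n * Psi E * (DSK n)⁻¹
    let X₁ : Matrix (Fin n ⊕ Fin n)
        ((SymIdx n ⊕ SkewIdx n) ⊕ ((Fin n × Fin m) ⊕ (Fin n × Fin m))) ℝ :=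
      fromCols
        (fromRows
          (fromCols (α₁⁻¹ • (rowKronId (reV uh) * N₁))
            ((-(α₁⁻¹)) • (rowKronId (imV uh) * N₂)))
          (fromCols (α₁⁻¹ • (rowKronId (imV uh) * N₁))
            (α₁⁻¹ • (rowKronId (reV uh) * N₂))))
        (fromRows
          (fromCols (α₂⁻¹ • (idKronRow (reV ph) * Sig F))
            (α₂⁻¹ • (idKronRow (imV ph) * Sig F)))
          (fromCols (α₂⁻¹ • (idKronRow (imV ph) * Sig F))
            ((-(α₂⁻¹)) • (idKronRow (reV ph) * Sig F))))
    let Z : Matrix (Fin m ⊕ Fin m)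
        ((SymIdx n ⊕ SkewIdx n) ⊕ ((Fin n × Fin m) ⊕ (Fin n × Fin m))) ℝ :=
      fromCols 0
        (fromRows
          (fromCols (α₂⁻¹ • (rowKronId (reV uh) * Sig F))
            ((-(α₂⁻¹)) • (rowKronId (imV uh) * Sig F)))
          (fromCols (α₂⁻¹ • (rowKronId (imV uh) * Sig F))
            (α₂⁻¹ • (rowKronId (reV uh) * Sig F))))
    let I₁ : Matrix (Fin n ⊕ Fin n) ((Fin n ⊕ Fin n) ⊕ (Fin m ⊕ Fin m)) ℝ :=
      fromCols ((-(β₁⁻¹)) • (1 : Matrix (Fin n ⊕ Fin n) (Fin n ⊕ Fin n) ℝ)) 0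
    let I₂ : Matrix (Fin m ⊕ Fin m) ((Fin n ⊕ Fin n) ⊕ (Fin m ⊕ Fin m)) ℝ :=
      fromCols 0 ((-(β₂⁻¹)) • (1 : Matrix (Fin m ⊕ Fin m) (Fin m ⊕ Fin m) ℝ))
    let M := fromBlocks X₁ I₁ Z I₂
    let w : (Fin n ⊕ Fin n) ⊕ (Fin m ⊕ Fin m) → ℝ :=
      Sum.elim (Sum.elim (reV Q) (imV Q)) (Sum.elim (reV Rh) (imV Rh))
    IsUnit (M * Mᵀ) ∧
      IsLeast
        {t : ℝ | ∃ (ΔE : Matrix (Fin n) (Fin n) ℂ) (ΔF : Matrix (Fin m) (Fin n) ℂ)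
            (Δq : Fin n → ℂ) (Δr : Fin m → ℂ),
            ΔE.IsHermitian ∧
            (E + ΔE.hadamard (theta E)) *ᵥ uh + (F + ΔF.hadamard (theta F))ᴴ *ᵥ ph = q + Δq ∧
            (F + ΔF.hadamard (theta F)) *ᵥ uh = r + Δr ∧
            t = Real.sqrt (α₁ ^ 2 * frob (ΔE.hadamard (theta E)) ^ 2 +
                  α₂ ^ 2 * frob (ΔF.hadamard (theta F)) ^ 2 +
                  β₁ ^ 2 * eunorm Δq ^ 2 + β₂ ^ 2 * eunorm Δr ^ 2)}
        (eunorm ((Mᵀ * (M * Mᵀ)⁻¹) *ᵥ w)) := by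
  intro Q Rh N₁ N₂ X₁ Z I₁ I₂ M w
  have hunit : IsUnit (M * Mᵀ) :=
    isUnit_perturbationMatrix_mul_transpose E F uh ph α₁ α₂ hβ₁.ne' hβ₂.ne'
  exact ⟨hunit, isLeast_eunorm_pinv_mulVec M hunit w
    (fun _ hx => exists_mem_backwardErrors_le hE hα₁.ne' hα₂.ne' hβ₁.ne' hβ₂.ne' hx)
    (fun _ ht => exists_perturbationMatrix_mulVec_eq hE hα₁.ne' hα₂.ne' hβ₁.ne' hβ₂.ne' ht)⟩

end GSPPBE
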